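/- Let K ⊂ ℂⁿ be a nonempty compact set. Then there exists a Borel probability measure ν on K such that (K,ν) satisfies the Bernstein–Markov property: there exist constants M_k > 0 with limsup_{k→∞} M_k^{1/k} = 1 such that for every k ∈ ℕ and every holomorphic polynomial p in n complex variables of degree at most k, sup_{z ∈ K} |p(z)| ≤ M_k · (∫_K |p|² dν)^{1/2}. -/

import Mathlib

open MeasureTheory Filter Topology Module Matrix
open scoped ENNReal NNReal

lemma fekete_aux {X : Type*} [TopologicalSpace X] [CompactSpace X] [Nonempty X]
    (V : Submodule ℂ C(X, ℂ)) [FiniteDimensional ℂ V] :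
    ∃ x : Fin (Module.finrank ℂ V) → X, ∀ f ∈ V, ∀ z : X,
      ‖f z‖ ≤ ∑ j, ‖f (x j)‖ := by
  by_cases h0 : Module.finrank ℂ V = 0
  · refine ⟨fun i => absurd i.2 (by omega), ?_⟩
    intro f hf z
    have hbot : V = ⊥ := Submodule.finrank_eq_zero.mp h0
    have : f = 0 := by simpa [hbot] using hf
    subst this
    simpa using Finset.sum_nonneg fun j _ => (norm_nonneg _)
  set m := Module.finrank ℂ V with hm
  have hpos : 0 < m := Nat.pos_of_ne_zero h0
  let b : Basis (Fin m) ℂ V := Module.finBasis ℂ V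
  let B : Fin m → C(X, ℂ) := fun i => (b i : C(X, ℂ))
  -- linear independence of evaluations
  have hind : ∀ c : Fin m → ℂ, (∀ z : X, ∑ i, c i * B i z = 0) → ∀ i, c i = 0 := by
    intro c hc
    have hsum : (∑ i, c i • b i) = 0 := by
      apply Subtype.ext
      have : ((∑ i, c i • b i : V) : C(X, ℂ)) = ∑ i, c i • B i := by
        push_cast [B]
        simp
      rw [this]
      ext z
      simpa using hc z
    exact Fintype.linearIndependent_iff.mp b.linearIndependent c hsum
  -- evaluation vectors
  set A : X → (Fin m → ℂ) := fun z i => B i z with hA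
  -- build linearly independent evaluation families
  have hbuild : ∀ r, r ≤ m → ∃ y : Fin r → X, LinearIndependent ℂ (A ∘ y) := by
    intro r
    induction r with
    | zero => exact fun _ => ⟨fun i => absurd i.2 (by omega), linearIndependent_empty_type⟩
    | succ r ih =>
      intro hr
      obtain ⟨y, hy⟩ := ih (by omega)
      set S := Submodule.span ℂ (Set.range (A ∘ y)) with hS
      have hfr : finrank ℂ S ≤ r := by
        have h1 := finrank_span_le_card (R := ℂ) (Set.range (A ∘ y))
        refine h1.trans ?_
        rw [Set.toFinset_range]
        exact (Finset.card_image_le).trans (by simp)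
      have hlt : S < ⊤ := by
        refine lt_top_iff_ne_top.mpr fun h => ?_
        rw [h] at hfr
        rw [finrank_top, Module.finrank_fin_fun] at hfr
        omega
      have hz : ∃ z : X, A z ∉ S := by
        by_contra hcon
        push_neg at hcon
        obtain ⟨φ, hφne, hφ⟩ := Submodule.exists_dual_map_eq_bot_of_lt_top hlt inferInstance
        have hφz : ∀ z : X, φ (A z) = 0 := by
          intro z
          have : φ (A z) ∈ S.map φ := Submodule.mem_map_of_mem (hcon z)
          simpa [hφ] using this
        have hc0 : ∀ i, φ (fun j => if i = j then 1 else 0) = 0 := by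
          apply hind
          intro z
          have h2 := hφz z
          rw [LinearMap.pi_apply_eq_sum_univ φ (A z)] at h2
          calc ∑ i, (φ fun j => if i = j then 1 else 0) * B i z
              = ∑ i, A z i • φ (fun j => if i = j then 1 else 0) := by
                refine Finset.sum_congr rfl fun i _ => ?_
                simp [hA, mul_comm]
            _ = 0 := h2
        have : ∀ v, φ v = 0 := by
          intro v
          rw [LinearMap.pi_apply_eq_sum_univ φ v]
          simp [hc0]
        exact hφne (LinearMap.ext this)
      obtain ⟨z, hzS⟩ := hz
      refine ⟨Fin.snoc y z, ?_⟩
      rw [show A ∘ Fin.snoc y z = Fin.snoc (A ∘ y) (A z) from Fin.comp_snoc A y z]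
      exact linearIndependent_fin_snoc.mpr ⟨hy, hzS⟩
  obtain ⟨y0, hy0⟩ := hbuild m le_rfl
  set Mmap : (Fin m → X) → Matrix (Fin m) (Fin m) ℂ :=
    fun x => Matrix.of fun i j => B i (x j) with hMmap
  have hdet0 : (Mmap y0).det ≠ 0 := by
    have hunit : IsUnit (Matrix.of fun j i => A (y0 j) i) := by
      rw [← Matrix.linearIndependent_rows_iff_isUnit]
      exact hy0
    have htr : Mmap y0 = (Matrix.of fun j i => A (y0 j) i)ᵀ := rfl
    rw [htr, Matrix.det_transpose]
    exact ((Matrix.isUnit_iff_isUnit_det _).mp hunit).ne_zero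
  have hTcont : Continuous fun x : Fin m → X => ‖(Mmap x).det‖ := by
    refine continuous_norm.comp (Continuous.matrix_det ?_)
    exact continuous_pi fun i => continuous_pi fun j => (B i).continuous.comp (continuous_apply j)
  obtain ⟨x0, -, hx0⟩ := isCompact_univ.exists_isMaxOn (Set.univ_nonempty) hTcont.continuousOn
  have hx0' : ∀ y, ‖(Mmap y).det‖ ≤ ‖(Mmap x0).det‖ :=
    fun y => hx0 (Set.mem_univ y)
  have hdetpos : 0 < ‖(Mmap x0).det‖ :=
    lt_of_lt_of_le (norm_pos_iff.mpr hdet0) (hx0' y0)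
  refine ⟨x0, ?_⟩
  intro f hf z
  set Mx := Mmap x0 with hMx
  set w : Fin m → ℂ := fun i => B i z with hw
  set c := Mx.cramer w with hc
  have hcb : ∀ j, ‖c j‖ ≤ ‖Mx.det‖ := by
    intro j
    have hcj : c j = (Mmap (Function.update x0 j z)).det := by
      rw [hc, Matrix.cramer_apply]
      congr 1
      ext i l
      by_cases hl : l = j <;>
        simp [hMx, hMmap, Matrix.updateCol_apply, Function.update_apply, hl, hw]
    rw [hcj]
    exact hx0' _
  have hkey : ∀ i, ∑ j, c j * B i (x0 j) = Mx.det * B i z := by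
    intro i
    have h3 := congrFun (Matrix.mulVec_cramer Mx w) i
    have h4 : ∑ j, Mx i j * c j = Mx.det * w i := by
      simpa [Matrix.mulVec, dotProduct] using h3
    calc ∑ j, c j * B i (x0 j) = ∑ j, Mx i j * c j := by
          refine Finset.sum_congr rfl fun j _ => ?_
          rw [mul_comm]
          rfl
      _ = Mx.det * w i := h4
      _ = Mx.det * B i z := rfl
  set v : V := ⟨f, hf⟩ with hv
  set a : Fin m → ℂ := fun i => b.repr v i with ha
  have heval : ∀ u : X, f u = ∑ i, a i * B i u := by
    intro u
    have h5 := b.sum_repr v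
    have h6 : ((∑ i, b.repr v i • b i : V) : C(X, ℂ)) = (f : C(X, ℂ)) := by rw [h5]
    have h7 : ((∑ i, b.repr v i • b i : V) : C(X, ℂ)) = ∑ i, a i • B i := by
      push_cast
      rfl
    rw [h7] at h6
    calc f u = (∑ i, a i • B i) u := by rw [h6]
      _ = ∑ i, a i * B i u := by simp
  have hmain : Mx.det * f z = ∑ j, c j * f (x0 j) := by
    calc Mx.det * f z = Mx.det * ∑ i, a i * B i z := by rw [heval z]
      _ = ∑ i, a i * (Mx.det * B i z) := by
          rw [Finset.mul_sum]
          exact Finset.sum_congr rfl fun i _ => by ring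
      _ = ∑ i, a i * ∑ j, c j * B i (x0 j) := by
          refine Finset.sum_congr rfl fun i _ => ?_
          rw [hkey i]
      _ = ∑ i, ∑ j, a i * (c j * B i (x0 j)) := by
          refine Finset.sum_congr rfl fun i _ => ?_
          rw [Finset.mul_sum]
      _ = ∑ j, ∑ i, a i * (c j * B i (x0 j)) := Finset.sum_comm
      _ = ∑ j, c j * ∑ i, a i * B i (x0 j) := by
          refine Finset.sum_congr rfl fun j _ => ?_
          rw [Finset.mul_sum]
          exact Finset.sum_congr rfl fun i _ => by ring
      _ = ∑ j, c j * f (x0 j) := by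
          refine Finset.sum_congr rfl fun j _ => ?_
          rw [heval (x0 j)]
  have habs : ‖Mx.det‖ * ‖f z‖ ≤
      ‖Mx.det‖ * ∑ j, ‖f (x0 j)‖ := by
    calc ‖Mx.det‖ * ‖f z‖ = ‖Mx.det * f z‖ := (norm_mul _ _).symm
      _ = ‖∑ j, c j * f (x0 j)‖ := by rw [hmain]
      _ ≤ ∑ j, ‖c j * f (x0 j)‖ := norm_sum_le _ _
      _ ≤ ∑ j, ‖Mx.det‖ * ‖f (x0 j)‖ := by
          refine Finset.sum_le_sum fun j _ => ?_
          rw [norm_mul]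
          exact mul_le_mul_of_nonneg_right (hcb j) (norm_nonneg _)
      _ = ‖Mx.det‖ * ∑ j, ‖f (x0 j)‖ := (Finset.mul_sum _ _ _).symm
  exact le_of_mul_le_mul_left habs hdetpos

/-- Corollary 3.5: every compact set `K ⊂ ℂⁿ` admits a Borel probability measure `ν` such that
`(K, ν)` satisfies the Bernstein–Markov property: `‖p‖_K ≤ M_k ‖p‖_{L²(ν)}` for all holomorphic
polynomials `p` of degree at most `k`, with `limsup_k M_k^{1/k} = 1`. -/
theorem stmt9 (n : ℕ) (K : Set (Fin n → ℂ)) (hK : IsCompact K) (hne : K.Nonempty) :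
    ∃ (ν : Measure ↥K) (_ : IsProbabilityMeasure ν) (M : ℕ → ℝ),
      (∀ k, 0 < M k) ∧
      Filter.limsup (fun k : ℕ => (M k) ^ ((1 : ℝ) / (k : ℝ))) atTop = 1 ∧
      ∀ (k : ℕ) (p : MvPolynomial (Fin n) ℂ), p.totalDegree ≤ k → ∀ z : ↥K,
        ‖MvPolynomial.eval (z : Fin n → ℂ) p‖ ≤
          M k * (∫ w : ↥K,
              (‖MvPolynomial.eval (w : Fin n → ℂ) p‖) ^ 2 ∂ν) ^ ((1 : ℝ) / 2) := by
  classical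
  haveI hcs : CompactSpace ↥K := isCompact_iff_compactSpace.mp hK
  haveI hniX : Nonempty ↥K := hne.to_subtype
  -- the monomials as continuous maps on K
  set g : (Fin n → ℕ) → C(↥K, ℂ) :=
    fun d => ⟨fun x => ∏ i, (x : Fin n → ℂ) i ^ d i, by
      exact continuous_finset_prod _ fun i _ =>
        ((continuous_apply i).comp continuous_subtype_val).pow _⟩ with hg
  set D : ℕ → Finset (Fin n → ℕ) := fun k => Fintype.piFinset fun _ => Finset.range (k+1) with hD
  set Vk : ℕ → Submodule ℂ C(↥K, ℂ) :=
    fun k => Submodule.span ℂ (((D k).image g : Finset C(↥K, ℂ)) : Set C(↥K, ℂ)) with hVk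
  haveI hfd : ∀ k, FiniteDimensional ℂ (Vk k) := fun k =>
    FiniteDimensional.span_of_finite ℂ (Finset.finite_toSet _)
  set m : ℕ → ℕ := fun k => Module.finrank ℂ (Vk k) with hmdef
  have hm_le : ∀ k, m k ≤ (k+1)^n := by
    intro k
    have h1 := finrank_span_finset_le_card (R := ℂ) ((D k).image g)
    have h2 : ((D k).image g).card ≤ (D k).card := Finset.card_image_le
    have h3 : (D k).card = (k+1)^n := by simp [hD]
    rw [Set.finrank] at h1
    exact le_trans h1 (by omega)
  have hm_pos : ∀ k, 0 < m k := by
    intro k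
    rcases Nat.eq_zero_or_pos (m k) with h | h
    · exfalso
      have hbot : Vk k = ⊥ := Submodule.finrank_eq_zero.mp h
      have hmem : g (fun _ => 0) ∈ Vk k := by
        apply Submodule.subset_span
        refine Finset.mem_coe.mpr (Finset.mem_image.mpr ⟨fun _ => 0, ?_, rfl⟩)
        simp [hD]
      rw [hbot, Submodule.mem_bot] at hmem
      obtain ⟨x⟩ := hniX
      have hx := congrArg (fun f : C(↥K, ℂ) => f x) hmem
      simp [hg] at hx
    · exact h
  have hpoly : ∀ (k : ℕ) (p : MvPolynomial (Fin n) ℂ), p.totalDegree ≤ k →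
      ∃ f : C(↥K, ℂ), f ∈ Vk k ∧ ∀ x : ↥K, f x = MvPolynomial.eval (x : Fin n → ℂ) p := by
    intro k p hp
    refine ⟨∑ d ∈ p.support, p.coeff d • g d, ?_, ?_⟩
    · refine Submodule.sum_mem _ fun d hd => Submodule.smul_mem _ _ (Submodule.subset_span ?_)
      refine Finset.mem_coe.mpr (Finset.mem_image.mpr ⟨d, ?_, rfl⟩)
      refine Fintype.mem_piFinset.mpr fun i => Finset.mem_range.mpr ?_
      have hdi : d i ≤ d.sum fun _ e => e := by
        rw [Finsupp.sum]
        by_cases h : i ∈ d.support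
        · exact Finset.single_le_sum (f := fun a => d a) (fun _ _ => Nat.zero_le _) h
        · simp [Finsupp.notMem_support_iff.mp h]
      have htot := (MvPolynomial.le_totalDegree hd).trans hp
      omega
    · intro x
      rw [MvPolynomial.eval_eq']
      simp [hg]
  choose xs hxs using fun k => fekete_aux (Vk k)
  set μs : ℕ → Measure ↥K :=
    fun k => (m k : ℝ≥0∞)⁻¹ • ∑ j : Fin (m k), Measure.dirac (xs k j) with hμs
  set t : ℕ → ℝ≥0∞ := fun k => (((k+1) * (k+2) : ℕ) : ℝ≥0∞)⁻¹ with ht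
  set ν : Measure ↥K := Measure.sum (fun k => t k • μs k) with hν
  have hμuniv : ∀ k, μs k Set.univ = 1 := by
    intro k
    rw [hμs]
    simp only [Measure.smul_apply, Measure.finset_sum_apply, measure_univ, smul_eq_mul,
      Finset.sum_const, Finset.card_univ, Fintype.card_fin, nsmul_eq_mul, mul_one]
    exact ENNReal.inv_mul_cancel (Nat.cast_ne_zero.mpr (hm_pos k).ne') (ENNReal.natCast_ne_top _)
  have htsum : ∑' k, t k = 1 := by
    have hreal : HasSum (fun k : ℕ => ((((k+1) * (k+2) : ℕ) : ℝ))⁻¹) 1 := by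
      rw [hasSum_iff_tendsto_nat_of_nonneg (fun i => by positivity)]
      have hps : ∀ N : ℕ, ∑ k ∈ Finset.range N, ((((k+1) * (k+2) : ℕ) : ℝ))⁻¹
          = 1 - ((N : ℝ)+1)⁻¹ := by
        intro N
        induction N with
        | zero => simp
        | succ N ihN =>
          rw [Finset.sum_range_succ, ihN]
          push_cast
          have h1 : ((N:ℝ)+1) ≠ 0 := by positivity
          have h2 : ((N:ℝ)+2) ≠ 0 := by positivity
          field_simp
          ring
      simp_rw [hps]
      have := tendsto_one_div_add_atTop_nhds_zero_nat (𝕜 := ℝ)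
      have h0 : Tendsto (fun N : ℕ => ((N : ℝ)+1)⁻¹) atTop (𝓝 0) := by
        simpa [one_div] using this
      simpa using Filter.Tendsto.const_sub (1:ℝ) h0
    have h2 : ∀ k : ℕ, (((k+1) * (k+2) : ℕ) : ℝ≥0∞)⁻¹
        = ENNReal.ofReal (((((k+1) * (k+2) : ℕ) : ℝ))⁻¹) := by
      intro k
      rw [← ENNReal.ofReal_natCast, ← ENNReal.ofReal_inv_of_pos (by positivity)]
    calc ∑' k, t k = ∑' k, ENNReal.ofReal (((((k+1) * (k+2) : ℕ) : ℝ))⁻¹) := tsum_congr h2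
      _ = ENNReal.ofReal (∑' k, ((((k+1) * (k+2) : ℕ) : ℝ))⁻¹) :=
          (ENNReal.ofReal_tsum_of_nonneg (fun k => by positivity) hreal.summable).symm
      _ = 1 := by rw [hreal.tsum_eq, ENNReal.ofReal_one]
  haveI hprob : IsProbabilityMeasure ν := by
    constructor
    rw [hν, Measure.sum_apply _ MeasurableSet.univ]
    simp_rw [Measure.smul_apply, hμuniv, smul_eq_mul, mul_one]
    exact htsum
  refine ⟨ν, hprob, fun k => ((k:ℝ)+2)^(n+1), fun k => by positivity, ?_, ?_⟩
  · -- limsup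
    have hlim : Tendsto (fun k : ℕ => (((k:ℝ)+2)^(n+1)) ^ ((1:ℝ)/(k:ℝ))) atTop (𝓝 1) := by
      have hbase : Tendsto (fun k : ℕ => (k:ℝ)+2) atTop atTop :=
        Filter.tendsto_atTop_add_const_right _ 2 tendsto_natCast_atTop_atTop
      have h1 := (tendsto_rpow_div_mul_add ((n:ℝ)+1) 1 (-2) zero_ne_one).comp hbase
      refine h1.congr fun k => ?_
      have hx : (0:ℝ) ≤ (k:ℝ)+2 := by positivity
      have : ((n:ℝ)+1) / (1 * ((k:ℝ)+2) + -2) = ((n+1 : ℕ) : ℝ) * ((1:ℝ)/(k:ℝ)) := by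
        push_cast
        rw [one_mul]
        ring_nf
      simp only [Function.comp]
      rw [this, Real.rpow_natCast_mul hx]
    exact hlim.limsup_eq
  · -- main inequality
    intro k p hp z
    obtain ⟨f, hfV, hfe⟩ := hpoly k p hp
    have hFc : Continuous fun w : ↥K => (‖f w‖)^2 :=
      (continuous_norm.comp f.continuous).pow 2
    have hint : ∀ (μ' : Measure ↥K) [IsFiniteMeasure μ'],
        Integrable (fun w => (‖f w‖)^2) μ' := fun μ' _ =>
      integrableOn_univ.mp (hFc.continuousOn.integrableOn_compact isCompact_univ)
    have hIeq : (∫ w : ↥K, (‖MvPolynomial.eval (w : Fin n → ℂ) p‖)^2 ∂ν)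
        = ∫ w : ↥K, (‖f w‖)^2 ∂ν := by
      refine integral_congr_ae (Filter.Eventually.of_forall fun w => ?_)
      show ‖(MvPolynomial.eval (w : Fin n → ℂ)) p‖ ^ 2 = ‖f w‖ ^ 2
      rw [hfe w]
    rw [hIeq]
    set I := ∫ w : ↥K, (‖f w‖)^2 ∂ν with hI
    have hInn : 0 ≤ I := integral_nonneg fun w => by positivity
    have hmono : ∫ w : ↥K, (‖f w‖)^2 ∂(t k • μs k) ≤ I := by
      refine integral_mono_measure ?_ ?_ (hint ν)
      · rw [hν]; exact Measure.le_sum _ k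
      · exact Filter.Eventually.of_forall fun w => by positivity
    have hμint : ∫ w : ↥K, (‖f w‖)^2 ∂(μs k)
        = ((m k : ℝ))⁻¹ * ∑ j, (‖f (xs k j)‖)^2 := by
      rw [hμs]
      rw [integral_smul_measure, integral_finset_sum_measure (fun j _ => hint _)]
      simp [integral_dirac, ENNReal.toReal_inv, smul_eq_mul]
      exact Or.inl rfl
    have hsmul : ∫ w : ↥K, (‖f w‖)^2 ∂(t k • μs k)
        = (t k).toReal * ∫ w : ↥K, (‖f w‖)^2 ∂(μs k) := by
      rw [integral_smul_measure]; rfl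
    set q : ℝ := (((k+1) * (k+2) : ℕ) : ℝ) with hqdef
    have hqpos : (0:ℝ) < q := by positivity
    have htk : (t k).toReal = q⁻¹ := by
      rw [ht, ENNReal.toReal_inv, ENNReal.toReal_natCast]
    have hmkpos : (0:ℝ) < (m k : ℝ) := by exact_mod_cast hm_pos k
    have hlower : q⁻¹ * (((m k : ℝ))⁻¹ * ∑ j, (‖f (xs k j)‖)^2) ≤ I := by
      calc q⁻¹ * (((m k : ℝ))⁻¹ * ∑ j, (‖f (xs k j)‖)^2)
          = ∫ w : ↥K, (‖f w‖)^2 ∂(t k • μs k) := by rw [hsmul, hμint, htk]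
        _ ≤ I := hmono
    have hS : ∑ j, (‖f (xs k j)‖)^2 ≤ q * (m k : ℝ) * I := by
      have h := mul_le_mul_of_nonneg_left hlower (by positivity : (0:ℝ) ≤ q * (m k : ℝ))
      calc ∑ j, (‖f (xs k j)‖)^2
          = q * (m k : ℝ) * (q⁻¹ * (((m k : ℝ))⁻¹ * ∑ j, (‖f (xs k j)‖)^2)) := by
            field_simp
        _ ≤ q * (m k : ℝ) * I := h
    have hA : ‖f z‖ ≤ ∑ j, ‖f (xs k j)‖ := hxs k f hfV z
    have hCS : (∑ j, ‖f (xs k j)‖)^2 ≤ (m k : ℝ) * ∑ j, (‖f (xs k j)‖)^2 := by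
      have h := sq_sum_le_card_mul_sum_sq (s := (Finset.univ : Finset (Fin (m k))))
        (f := fun j => ‖f (xs k j)‖)
      simpa using h
    have hmk2 : (m k : ℝ) ≤ ((k:ℝ)+2)^n := by
      have h1 : (m k : ℝ) ≤ (((k+1)^n : ℕ) : ℝ) := by exact_mod_cast hm_le k
      refine h1.trans ?_
      push_cast
      exact pow_le_pow_left₀ (by positivity) (by linarith) n
    have hq2 : q ≤ ((k:ℝ)+2)^2 := by
      rw [hqdef]; push_cast; nlinarith [Nat.cast_nonneg (α := ℝ) k]
    have key : (‖f z‖)^2 ≤ (((k:ℝ)+2)^(n+1))^2 * I := by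
      calc (‖f z‖)^2 ≤ (∑ j, ‖f (xs k j)‖)^2 :=
            pow_le_pow_left₀ (norm_nonneg _) hA 2
        _ ≤ (m k : ℝ) * ∑ j, (‖f (xs k j)‖)^2 := hCS
        _ ≤ (m k : ℝ) * (q * (m k : ℝ) * I) :=
            mul_le_mul_of_nonneg_left hS hmkpos.le
        _ = (m k : ℝ)^2 * q * I := by ring
        _ ≤ (((k:ℝ)+2)^n)^2 * (((k:ℝ)+2)^2) * I := by
            have hb : (m k : ℝ)^2 * q ≤ (((k:ℝ)+2)^n)^2 * (((k:ℝ)+2)^2) := by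
              have := mul_le_mul (pow_le_pow_left₀ hmkpos.le hmk2 2) hq2 hqpos.le (by positivity)
              exact this
            exact mul_le_mul_of_nonneg_right hb hInn
        _ = (((k:ℝ)+2)^(n+1))^2 * I := by ring
    have hsqrt : (((k:ℝ)+2)^(n+1)) * I ^ ((1:ℝ)/2) = Real.sqrt ((((k:ℝ)+2)^(n+1))^2 * I) := by
      rw [← Real.sqrt_eq_rpow, Real.sqrt_mul (by positivity), Real.sqrt_sq (by positivity)]
    show ‖(MvPolynomial.eval (z : Fin n → ℂ)) p‖ ≤ (((k:ℝ)+2)^(n+1)) * I ^ ((1:ℝ)/2)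
    rw [hsqrt]
    rw [← hfe z]
    exact (Real.le_sqrt (norm_nonneg _) (by positivity)).mpr key
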